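/- Let A, B be positive definite real symmetric 2×2 matrices. Then B − A is positive definite if and only if π^ℝ(B) − π^ℝ(A) > d_SL(π^SL(B), π^SL(A)). -/

import Mathlib

/-!
Write `A = Yᴴ Y` with `Y` invertible. The congruence `B - A = Yᴴ (C - 1) Y`, where
`C = Y⁻ᴴ B Y⁻¹`, reduces positivity of `B - A` to both eigenvalues of `C` exceeding `1`.
The matrix `C` has determinant `det B / det A = u²` and trace `tr (B A⁻¹)`, where
`u = √(det B) / √(det A)`. Since `π^SL(B) π^SL(A)⁻¹ = u⁻¹ B A⁻¹` has determinant `1`, its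
eigenvalues satisfy `μ₀ μ₁ = 1`, and the eigenvalues of `C` are `u μ₀` and `u μ₁ = u / μ₀`.
Both exceed `1` iff `|log μ₀| < log u`, which after multiplying by `√2` is the claimed inequality.
-/

open Matrix Polynomial
open scoped MatrixOrder ComplexOrder

theorem pos_and_pos_iff_mul_pos_and_add_pos {α : Type*} [Ring α] [LinearOrder α]
    [IsStrictOrderedRing α] {x y : α} : 0 < x ∧ 0 < y ↔ 0 < x * y ∧ 0 < x + y := by
  refine ⟨fun ⟨hx, hy⟩ => ⟨mul_pos hx hy, add_pos hx hy⟩, fun ⟨hxy, hsum⟩ => ?_⟩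
  rcases mul_pos_iff.mp hxy with h | ⟨hx, hy⟩
  · exact h
  · exact absurd hsum (add_neg hx hy).not_gt

open Real in
theorem abs_log_lt_log_iff {x u : ℝ} (hx : 0 < x) (hu : 0 < u) :
    |log x| < log u ↔ u⁻¹ < x ∧ x < u := by
  rw [abs_lt, ← log_inv, log_lt_log_iff (inv_pos.mpr hu) hx, log_lt_log_iff hx hu]

open Real in
theorem one_lt_mul_and_one_lt_mul_iff_sqrt_log_lt {u x y : ℝ} (hu : 0 < u) (hx : 0 < x)
    (hxy : x * y = 1) : (1 < u * x ∧ 1 < u * y) ↔ √(log x ^ 2 + log y ^ 2) < √2 * log u := by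
  obtain rfl : y = x⁻¹ := eq_inv_of_mul_eq_one_right hxy
  have hsqrt : √(log x ^ 2 + log x⁻¹ ^ 2) = √2 * |log x| := by
    rw [log_inv, neg_sq, ← two_mul, sqrt_mul zero_le_two, sqrt_sq_eq_abs]
  rw [hsqrt, mul_lt_mul_iff_right₀ (by positivity), abs_log_lt_log_iff hx hu,
    inv_lt_iff_one_lt_mul₀' hu, ← div_eq_mul_inv, one_lt_div hx]

open Real in
theorem sqrt_two_mul_log_sqrt_div_sqrt {a b : ℝ} (ha : 0 < a) (hb : 0 < b) :
    √2 * log (√b / √a) = log b / √2 - log a / √2 := by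
  rw [log_div (by positivity) (by positivity), log_sqrt hb.le, log_sqrt ha.le]
  field_simp
  rw [sq_sqrt zero_le_two]

namespace Matrix

section Charpoly

variable {n R : Type*} [Fintype n] [DecidableEq n] [CommRing R] {M : Matrix n n R} {μ : n → R}

theorem splits_charpoly_of_charpoly_eq_prod (h : M.charpoly = ∏ i, (X - C (μ i))) :
    M.charpoly.Splits :=
  h ▸ Splits.prod fun i _ => Splits.X_sub_C (μ i)

theorem roots_charpoly_of_charpoly_eq_prod [IsDomain R] (h : M.charpoly = ∏ i, (X - C (μ i))) :
    M.charpoly.roots = Finset.univ.val.map μ := by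
  rw [h, ← roots_multiset_prod_X_sub_C (Finset.univ.val.map μ), Multiset.map_map]
  rfl

theorem det_eq_prod_of_charpoly_eq_prod [IsDomain R] (h : M.charpoly = ∏ i, (X - C (μ i))) :
    M.det = ∏ i, μ i := by
  rw [det_eq_prod_roots_charpoly_of_splits (splits_charpoly_of_charpoly_eq_prod h),
    roots_charpoly_of_charpoly_eq_prod h]
  rfl

theorem trace_eq_sum_of_charpoly_eq_prod [IsDomain R] (h : M.charpoly = ∏ i, (X - C (μ i))) :
    M.trace = ∑ i, μ i := by
  rw [trace_eq_sum_roots_charpoly_of_splits (splits_charpoly_of_charpoly_eq_prod h),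
    roots_charpoly_of_charpoly_eq_prod h]
  rfl

end Charpoly

theorem PosDef.exists_sub_posDef_iff_sub_one_posDef {n 𝕜 : Type*} [Fintype n] [DecidableEq n]
    [RCLike 𝕜] {A B : Matrix n n 𝕜} (hA : A.PosDef) (hB : B.PosDef) :
    ∃ C : Matrix n n 𝕜, C.PosDef ∧ C.det = B.det / A.det ∧ C.trace = (B * A⁻¹).trace ∧
      ((B - A).PosDef ↔ (C - 1).PosDef) := by
  obtain ⟨Y, hY, rfl⟩ :=
    CStarAlgebra.isStrictlyPositive_iff_eq_star_mul_self.mp hA.isStrictlyPositive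
  have hinv : Y⁻¹ * Y = 1 := nonsing_inv_mul Y ((isUnit_iff_isUnit_det Y).mp hY)
  refine ⟨star Y⁻¹ * B * Y⁻¹,
    (isUnit_nonsing_inv_iff.mpr hY).posDef_star_left_conjugate_iff.mpr hB, ?_, ?_, ?_⟩
  · simp only [det_mul, star_eq_conjTranspose, det_conjTranspose, det_nonsing_inv,
      Ring.inverse_eq_inv']
    rw [star_inv₀]
    ring
  · simp only [star_eq_conjTranspose]
    rw [trace_mul_cycle, mul_inv_rev, conjTranspose_nonsing_inv, trace_mul_comm]
  · have hBA : B - star Y * Y = star Y * (star Y⁻¹ * B * Y⁻¹ - 1) * Y := by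
      simp only [mul_sub, sub_mul, ← mul_assoc, ← star_mul, hinv, star_one, one_mul, mul_one]
      simp only [mul_assoc, hinv, mul_one]
    rw [hBA, hY.posDef_star_left_conjugate_iff]

theorem IsHermitian.posDef_iff_of_det_eq_of_trace_eq {M : Matrix (Fin 2) (Fin 2) ℝ}
    (hM : M.IsHermitian) {x y : ℝ} (hdet : M.det = x * y) (htr : M.trace = x + y) :
    M.PosDef ↔ 0 < x ∧ 0 < y := by
  rw [hM.posDef_iff_eigenvalues_pos, Fin.forall_fin_two, pos_and_pos_iff_mul_pos_and_add_pos,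
    pos_and_pos_iff_mul_pos_and_add_pos (x := x), ← hdet, ← htr, hM.det_eq_prod_eigenvalues,
    hM.trace_eq_sum_eigenvalues, Fin.prod_univ_two, Fin.sum_univ_two]
  rfl

theorem det_sub_one_fin_two (M : Matrix (Fin 2) (Fin 2) ℝ) :
    (M - 1).det = M.det - M.trace + 1 := by
  simp only [det_fin_two, trace_fin_two, sub_apply, one_apply_eq, ne_eq, zero_ne_one,
    not_false_eq_true, one_apply_ne, one_ne_zero]
  ring

theorem IsHermitian.posDef_sub_one_iff_of_det_eq_of_trace_eq {M : Matrix (Fin 2) (Fin 2) ℝ}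
    (hM : M.IsHermitian) {x y : ℝ} (hdet : M.det = x * y) (htr : M.trace = x + y) :
    (M - 1).PosDef ↔ 1 < x ∧ 1 < y := by
  have hdet' : (M - 1).det = (x - 1) * (y - 1) := by
    rw [det_sub_one_fin_two, hdet, htr]
    ring
  have htr' : (M - 1).trace = (x - 1) + (y - 1) := by
    rw [trace_sub, trace_one, htr, Fintype.card_fin]
    ring
  rw [(hM.sub isHermitian_one).posDef_iff_of_det_eq_of_trace_eq hdet' htr', sub_pos, sub_pos]

theorem smul_mul_inv_smul {n K : Type*} [Fintype n] [DecidableEq n] [Field K]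
    {A B : Matrix n n K} (hA : IsUnit A.det) {a b : K} (ha : a ≠ 0) :
    (b • B) * (a • A)⁻¹ = (b / a) • (B * A⁻¹) := by
  have hinv : (a • A)⁻¹ = a⁻¹ • A⁻¹ := by
    apply inv_eq_right_inv
    rw [smul_mul, Matrix.mul_smul, smul_smul, mul_nonsing_inv A hA, mul_inv_cancel₀ ha, one_smul]
  rw [hinv, smul_mul, Matrix.mul_smul, smul_smul, div_eq_mul_inv]

theorem det_inv_rpow_smul_self {n : Type*} [Fintype n] [DecidableEq n] [Nonempty n]
    {X : Matrix n n ℝ} (hX : 0 < X.det) :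
    ((X.det ^ (1 / Fintype.card n : ℝ))⁻¹ • X).det = 1 := by
  rw [det_smul, inv_pow, ← Real.rpow_natCast, ← Real.rpow_mul hX.le,
    one_div_mul_cancel (by positivity), Real.rpow_one, inv_mul_cancel₀ hX.ne']

end Matrix

/-- For `2 × 2` positive definite symmetric matrices, `B - A` is positive definite iff
`π^ℝ(B) - π^ℝ(A) > d_SL(π^SL(B), π^SL(A))`, with eigenvalues `mu i` of
`π^SL(B) * (π^SL(A))⁻¹` encoded via the characteristic polynomial. -/
theorem stmt6 (A B : Matrix (Fin 2) (Fin 2) ℝ) (hA : A.PosDef) (hB : B.PosDef)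
    (mu : Fin 2 → ℝ)
    (hmu : (((B.det ^ ((1 : ℝ) / 2))⁻¹ • B) * (((A.det ^ ((1 : ℝ) / 2))⁻¹ • A))⁻¹).charpoly
      = ∏ i, (Polynomial.X - Polynomial.C (mu i))) :
    (B - A).PosDef ↔
      Real.sqrt (∑ i, Real.log (mu i) ^ 2)
        < Real.log B.det / Real.sqrt 2 - Real.log A.det / Real.sqrt 2 := by
  have hdetA := hA.det_pos
  have hdetB := hB.det_pos
  have hSL (X : Matrix (Fin 2) (Fin 2) ℝ) (hX : 0 < X.det) :
      ((X.det ^ ((1 : ℝ) / 2))⁻¹ • X).det = 1 := by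
    simpa using det_inv_rpow_smul_self hX
  have hprod : mu 0 * mu 1 = 1 := by
    rw [← Fin.prod_univ_two, ← det_eq_prod_of_charpoly_eq_prod hmu, det_mul, det_nonsing_inv,
      Ring.inverse_eq_inv', hSL B hdetB, hSL A hdetA, inv_one, one_mul]
  simp only [← Real.sqrt_eq_rpow] at hmu
  set u := √B.det / √A.det with hu_def
  have hu : 0 < u := by positivity
  have htr : (B * A⁻¹).trace = u * mu 0 + u * mu 1 := by
    have htrN := trace_eq_sum_of_charpoly_eq_prod hmu
    rw [smul_mul_inv_smul (isUnit_iff_ne_zero.mpr hdetA.ne') (by positivity), trace_smul,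
      Fin.sum_univ_two, smul_eq_mul] at htrN
    rw [← mul_add, ← htrN, hu_def]
    field_simp
  obtain ⟨C, hC, hdetC, htrC, hiff⟩ := hA.exists_sub_posDef_iff_sub_one_posDef hB
  rw [htr] at htrC
  have hdetC' : C.det = (u * mu 0) * (u * mu 1) := by
    rw [hdetC, mul_mul_mul_comm, hprod, mul_one, hu_def, div_mul_div_comm,
      Real.mul_self_sqrt hdetB.le, Real.mul_self_sqrt hdetA.le]
  have hmu0 : 0 < mu 0 :=
    pos_of_mul_pos_right ((hC.1.posDef_iff_of_det_eq_of_trace_eq hdetC' htrC).mp hC).1 hu.le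
  rw [hiff, hC.1.posDef_sub_one_iff_of_det_eq_of_trace_eq hdetC' htrC, Fin.sum_univ_two,
    ← sqrt_two_mul_log_sqrt_div_sqrt hdetA hdetB,
    one_lt_mul_and_one_lt_mul_iff_sqrt_log_lt hu hmu0 hprod]
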